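/- Let ε ∈ [√(e/T), 1] with ε = 2^{-m} for a natural number m satisfying m ≤ (1/2) log₂(T/e), let T ≥ K^{2.4}, K ≥ 2, ψ = T/K², ρ = 1/2, v ∈ [0,1], Δ > 0 with √(4ε) < Δ/4, and suppose z ≥ log(ψTε²)/(2ε) > 0. Then √( ρ(v+2)·log(ψTε) / (4z) ) < Δ/4. -/

import Mathlib

open Real

set_option maxHeartbeats 1000000 in
theorem stmt2 (T K v Δ z : ℝ) (m : ℕ)
    (hK : 2 ≤ K) (hT : K ^ (2.4 : ℝ) ≤ T)
    (hm : (m : ℝ) ≤ (1 / 2) * Real.logb 2 (T / Real.exp 1))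
    (ε : ℝ) (hε : ε = (2 : ℝ) ^ (-(m : ℝ)))
    (hεlo : Real.sqrt (Real.exp 1 / T) ≤ ε) (hεhi : ε ≤ 1)
    (hv0 : 0 ≤ v) (hv1 : v ≤ 1) (hΔ : 0 < Δ)
    (hεΔ : Real.sqrt (4 * ε) < Δ / 4)
    (hn : 0 < Real.log ((T / K ^ 2) * T * ε ^ 2) / (2 * ε))
    (hz : Real.log ((T / K ^ 2) * T * ε ^ 2) / (2 * ε) ≤ z) :
    Real.sqrt ((1 / 2) * (v + 2) * Real.log ((T / K ^ 2) * T * ε) / (4 * z)) < Δ / 4 := by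
  have hε0 : 0 < ε := by rw [hε]; positivity
  have hK0 : (0:ℝ) < K := by linarith
  have hT1 : (1:ℝ) < T := by
    have h1 : (1:ℝ) < 2 ^ (2.4 : ℝ) := by
      have := Real.one_lt_rpow_iff_of_pos (x := (2:ℝ)) (by norm_num) (y := 2.4)
      rw [this]; norm_num
    have h2 : (2:ℝ) ^ (2.4:ℝ) ≤ K ^ (2.4:ℝ) :=
      Real.rpow_le_rpow (by norm_num) hK (by norm_num)
    linarith
  have hT0 : (0:ℝ) < T := by linarith
  have hlogT : 0 ≤ Real.log T := Real.log_nonneg (le_of_lt hT1)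
  have hlogK : 2.4 * Real.log K ≤ Real.log T := by
    have := Real.log_le_log (by positivity) hT
    rwa [Real.log_rpow hK0] at this
  -- log ε = - m * log 2
  have hlogε : Real.log ε = -(m : ℝ) * Real.log 2 := by
    rw [hε, Real.log_rpow (by norm_num)]
  -- m * log 2 ≤ (1/2) * (log T - 1)
  have hlog2 : (0:ℝ) < Real.log 2 := Real.log_pos (by norm_num)
  have hmlog : (m : ℝ) * Real.log 2 ≤ (1/2) * (Real.log T - 1) := by
    have h1 : Real.logb 2 (T / Real.exp 1) = (Real.log T - 1) / Real.log 2 := by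
      rw [Real.logb, Real.log_div (by positivity) (by positivity), Real.log_exp]
    rw [h1] at hm
    have := mul_le_mul_of_nonneg_right hm (le_of_lt hlog2)
    calc (m:ℝ) * Real.log 2 ≤ 1 / 2 * ((Real.log T - 1) / Real.log 2) * Real.log 2 := this
      _ = (1/2) * (Real.log T - 1) := by field_simp
  -- ε² ≥ e / T
  have hε2 : Real.exp 1 / T ≤ ε ^ 2 := by
    have := Real.sq_sqrt (show (0:ℝ) ≤ Real.exp 1 / T by positivity)
    nlinarith [Real.sqrt_nonneg (Real.exp 1 / T)]
  -- thus 2 log ε ≥ 1 - log T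
  have h2logε : 1 - Real.log T ≤ 2 * Real.log ε := by
    have := Real.log_le_log (by positivity) hε2
    rw [Real.log_div (by positivity) (by positivity), Real.log_exp, Real.log_pow] at this
    push_cast at this; linarith
  -- expand the two logs
  set L2 := Real.log ((T / K ^ 2) * T * ε ^ 2) with hL2def
  set L := Real.log ((T / K ^ 2) * T * ε) with hLdef
  have hL2 : L2 = 2 * Real.log T - 2 * Real.log K + 2 * Real.log ε := by
    rw [hL2def, Real.log_mul (by positivity) (by positivity),
      Real.log_mul (by positivity) (by positivity),
      Real.log_div (by positivity) (by positivity), Real.log_pow, Real.log_pow]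
    push_cast; ring
  have hL : L = 2 * Real.log T - 2 * Real.log K + Real.log ε := by
    rw [hLdef, Real.log_mul (by positivity) (by positivity),
      Real.log_mul (by positivity) (by positivity),
      Real.log_div (by positivity) (by positivity), Real.log_pow]
    push_cast; ring
  -- L2 ≥ 1 + log T / 6
  have hL2lb : 1 + Real.log T / 6 ≤ L2 := by
    rw [hL2]; linarith
  have hL2pos : 0 < L2 := by
    have : 0 < L2 / (2 * ε) := hn
    by_contra h
    push_neg at h
    have : L2 / (2 * ε) ≤ 0 := div_nonpos_of_nonpos_of_nonneg h (by positivity)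
    linarith
  -- key: 3 L ≤ 16 L2
  have hkey : 3 * L ≤ 16 * L2 := by
    have h1 : 3 * ((m:ℝ) * Real.log 2) ≤ 13 * L2 := by
      nlinarith
    have : L = L2 + (m:ℝ) * Real.log 2 := by rw [hL, hL2, hlogε]; ring
    linarith
  have hzpos : 0 < z := lt_of_lt_of_le hn hz
  have hLpos : 0 < L := by
    have : L = L2 + (m:ℝ) * Real.log 2 := by rw [hL, hL2, hlogε]; ring
    nlinarith [Nat.cast_nonneg (α := ℝ) m]
  -- main inequality: argument ≤ 4 ε
  have hmain : (1 / 2) * (v + 2) * L / (4 * z) ≤ 4 * ε := by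
    rw [div_le_iff₀ (by positivity)]
    have hzε : L2 ≤ 2 * (ε * z) := by
      rw [div_le_iff₀ (by positivity)] at hz
      linarith
    have a1 : (1 / 2) * (v + 2) * L ≤ (3 / 2) * L := by
      nlinarith [mul_nonneg (show (0:ℝ) ≤ 1 - v by linarith) hLpos.le]
    have a2 : (3 / 2) * L ≤ 8 * L2 := by linarith
    have a4 : 4 * ε * (4 * z) = 16 * (ε * z) := by ring
    linarith
  calc Real.sqrt ((1 / 2) * (v + 2) * L / (4 * z)) ≤ Real.sqrt (4 * ε) :=
        Real.sqrt_le_sqrt hmain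
    _ < Δ / 4 := hεΔ
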